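/- In the graph D_{r,q}, if a set S satisfies |S ∩ V(D_1)| ≤ 1 and S ∩ Y_1 = ∅ (where (X_1,Y_1) is the bipartition of D_1 with x_1 ∈ X_1), then F = X_1 \ (S ∪ {x_1}) is an (r−3)-fort of D_{r,q} disjoint from N[S]. -/
import Mathlib


open SimpleGraph

/-- Closed neighborhood of a set of vertices: `N[S]`. -/
def closedNbhd {V : Type*} (G : SimpleGraph V) (S : Set V) : Set V :=
  S ∪ {v | ∃ u ∈ S, G.Adj u v}

/-- The monitored sets `P^i(S)` of the k-power domination process:
`P^0(S) = N[S]`, `P^{i+1}(S) = ⋃ {N[v] : v ∈ P^i(S), |N[v] \ P^i(S)| ≤ k}`. -/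
def monitored {V : Type*} (G : SimpleGraph V) (k : ℕ) (S : Set V) : ℕ → Set V
  | 0 => closedNbhd G S
  | i + 1 => {w | ∃ v ∈ monitored G k S i,
      (closedNbhd G {v} \ monitored G k S i).ncard ≤ k ∧ w ∈ closedNbhd G {v}}

/-- `P^∞(S)`, realized as `P^{|V|}(S)` on a finite vertex type. -/
def monitoredInf {V : Type*} (G : SimpleGraph V) (k : ℕ) (S : Set V) : Set V :=
  monitored G k S (Nat.card V)

/-- `S` is a k-power dominating set. -/
def IsKPDS {V : Type*} (G : SimpleGraph V) (k : ℕ) (S : Set V) : Prop :=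
  monitoredInf G k S = Set.univ

/-- The k-power domination number `γ_{p,k}(G)`. -/
noncomputable def powerDomNumber {V : Type*} (G : SimpleGraph V) (k : ℕ) : ℕ :=
  sInf {m | ∃ S : Set V, S.Finite ∧ S.ncard = m ∧ IsKPDS G k S}

/-- A k-fort: a nonempty set `F` such that every vertex of `N(F) \ F`
has at least `k+1` neighbors in `F`. -/
def IsKFort {V : Type*} (G : SimpleGraph V) (k : ℕ) (F : Set V) : Prop :=
  F.Nonempty ∧ ∀ v ∈ closedNbhd G F \ F, k + 1 ≤ (G.neighborSet v ∩ F).ncard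

/-- Claw-free: no induced `K_{1,3}`. -/
def ClawFree {V : Type*} (G : SimpleGraph V) : Prop :=
  ∀ u a b c : V, G.Adj u a → G.Adj u b → G.Adj u c → a ≠ b → a ≠ c → b ≠ c →
    G.Adj a b ∨ G.Adj a c ∨ G.Adj b c

/-- `r`-regular. -/
def RegularOfDegree {V : Type*} (G : SimpleGraph V) (r : ℕ) : Prop :=
  ∀ v : V, (G.neighborSet v).ncard = r

/-- The domination number `γ(G)`. -/
noncomputable def domNumber {V : Type*} (G : SimpleGraph V) : ℕ :=
  sInf {m | ∃ S : Set V, S.Finite ∧ S.ncard = m ∧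
    ∀ v : V, v ∈ S ∨ ∃ u ∈ S, G.Adj v u}

/-- The total domination number `γ_t(G)`. -/
noncomputable def totalDomNumber {V : Type*} (G : SimpleGraph V) : ℕ :=
  sInf {m | ∃ S : Set V, S.Finite ∧ S.ncard = m ∧ ∀ v : V, ∃ u ∈ S, G.Adj v u}

/-- The graph `D_{r,q}` (see the paper): copies of `K_{r,r} - x_i y_i` joined in a
cycle by the edges `y_i x_{i+1}`, with `x_i = (i, inl 0)` and `y_i = (i, inr 0)`. -/
def Dgraph (r q : ℕ) [NeZero r] [NeZero q] :
    SimpleGraph (Fin q × (Fin r ⊕ Fin r)) :=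
  SimpleGraph.fromRel (fun p p' =>
    (p.1 = p'.1 ∧ ∃ a b, p.2 = Sum.inl a ∧ p'.2 = Sum.inr b ∧ ¬(a = 0 ∧ b = 0)) ∨
    (p'.1 = p.1 + 1 ∧ p.2 = Sum.inr 0 ∧ p'.2 = Sum.inl 0))

lemma Dgraph_adj_inl (r q : ℕ) [NeZero r] [NeZero q] (a : Fin r) (ha : a ≠ 0)
    (v : Fin q × (Fin r ⊕ Fin r)) :
    (Dgraph r q).Adj (0, Sum.inl a) v ↔ ∃ b, v = (0, Sum.inr b) := by
  simp only [Dgraph, SimpleGraph.fromRel_adj]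
  constructor
  · rintro ⟨hne, h | h⟩
    · rcases h with ⟨h1, a', b, h2, h3, h4⟩ | ⟨h1, h2, h3⟩
      · exact ⟨b, Prod.ext h1.symm h3⟩
      · simp at h2
    · rcases h with ⟨h1, a', b, h2, h3, h4⟩ | ⟨h1, h2, h3⟩
      · simp at h3
      · simp only [Sum.inl.injEq] at h3
        exact absurd h3 ha
  · rintro ⟨b, rfl⟩
    exact ⟨by simp, Or.inl (Or.inl ⟨rfl, a, b, rfl, rfl, fun h => ha h.1⟩)⟩

theorem Dgraph_fort (r q : ℕ) (hr : 4 ≤ r) (hq : 2 ≤ q) :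
    haveI : NeZero r := ⟨by omega⟩
    haveI : NeZero q := ⟨by omega⟩
    ∀ S : Set (Fin q × (Fin r ⊕ Fin r)),
      (S ∩ {p | p.1 = 0}).ncard ≤ 1 →
      S ∩ {p | p.1 = 0 ∧ ∃ b, p.2 = Sum.inr b} = ∅ →
      IsKFort (Dgraph r q) (r - 3)
        ({p | p.1 = 0 ∧ ∃ a, p.2 = Sum.inl a} \ (S ∪ {(0, Sum.inl 0)})) ∧
      Disjoint ({p | p.1 = 0 ∧ ∃ a, p.2 = Sum.inl a} \ (S ∪ {(0, Sum.inl 0)}))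
        (closedNbhd (Dgraph r q) S) := by
  haveI : NeZero r := ⟨by omega⟩
  haveI : NeZero q := ⟨by omega⟩
  intro S hS1 hS2
  set F : Set (Fin q × (Fin r ⊕ Fin r)) :=
    {p | p.1 = 0 ∧ ∃ a, p.2 = Sum.inl a} \ (S ∪ {(0, Sum.inl 0)}) with hF
  -- membership characterization of F
  have hmemF : ∀ p, p ∈ F ↔ ∃ a : Fin r, a ≠ 0 ∧ p = (0, Sum.inl a) ∧ p ∉ S := by
    intro p
    constructor
    · rintro ⟨⟨h0, a, ha⟩, hns⟩
      simp only [Set.mem_union, Set.mem_singleton_iff, not_or] at hns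
      refine ⟨a, ?_, ?_, hns.1⟩
      · rintro rfl
        exact hns.2 (Prod.ext h0 ha)
      · exact Prod.ext h0 ha
    · rintro ⟨a, ha, rfl, hns⟩
      refine ⟨⟨rfl, a, rfl⟩, ?_⟩
      simp only [Set.mem_union, Set.mem_singleton_iff, not_or]
      exact ⟨hns, by simp [Prod.ext_iff, ha]⟩
  set A : Set (Fin q × (Fin r ⊕ Fin r)) :=
    (fun a : Fin r => ((0 : Fin q), Sum.inl a)) '' {a | a ≠ 0} with hA
  have hFA : F = A \ S := by
    ext p
    simp only [hmemF, hA, Set.mem_diff, Set.mem_image, Set.mem_setOf_eq]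
    constructor
    · rintro ⟨a, ha, rfl, hns⟩; exact ⟨⟨a, ha, rfl⟩, hns⟩
    · rintro ⟨⟨a, ha, rfl⟩, hns⟩; exact ⟨a, ha, rfl, hns⟩
  have hAfin : A.Finite := Set.toFinite A
  have hAcard : A.ncard = r - 1 := by
    rw [hA, Set.ncard_image_of_injective _ (fun a b h => by
      simpa [Prod.ext_iff] using h)]
    have : ({a : Fin r | a ≠ 0}) = Set.univ \ {0} := by ext a; simp
    rw [this, Set.ncard_diff (by simp)]
    simp [Set.ncard_univ]
  have hAScard : (A ∩ S).ncard ≤ 1 := by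
    refine le_trans (Set.ncard_le_ncard ?_ (Set.toFinite _)) hS1
    rintro p ⟨⟨a, ha, rfl⟩, hs⟩
    exact ⟨hs, rfl⟩
  have hFcard : r - 2 ≤ F.ncard := by
    have : F = A \ (A ∩ S) := by rw [hFA, Set.diff_self_inter]
    rw [this, Set.ncard_diff Set.inter_subset_left, hAcard]
    omega
  have hFne : F.Nonempty := by
    rw [Set.nonempty_iff_ne_empty]
    intro h
    rw [h, Set.ncard_empty] at hFcard
    omega
  -- every element of F has form (0, inl a), a ≠ 0
  constructor
  · refine ⟨hFne, ?_⟩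
    rintro v ⟨hv1, hv2⟩
    have : ∃ u ∈ F, (Dgraph r q).Adj u v := by
      rcases hv1 with h | h
      · exact absurd h hv2
      · exact h
    obtain ⟨u, huF, hadj⟩ := this
    obtain ⟨a, ha, rfl, -⟩ := (hmemF u).mp huF
    obtain ⟨b, rfl⟩ := (Dgraph_adj_inl r q a ha v).mp hadj
    have hsub : F ⊆ (Dgraph r q).neighborSet (0, Sum.inr b) := by
      intro w hw
      obtain ⟨a', ha', rfl, -⟩ := (hmemF w).mp hw
      exact ((Dgraph_adj_inl r q a' ha' _).mpr ⟨b, rfl⟩).symm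
    have heq : (Dgraph r q).neighborSet (0, Sum.inr b) ∩ F = F :=
      Set.inter_eq_self_of_subset_right hsub
    rw [heq]
    omega
  · rw [Set.disjoint_left]
    rintro w hwF hwN
    obtain ⟨a, ha, rfl, hns⟩ := (hmemF w).mp hwF
    rcases hwN with h | ⟨u, huS, hadj⟩
    · exact hns h
    · obtain ⟨b, rfl⟩ := (Dgraph_adj_inl r q a ha u).mp hadj.symm
      have : ((0 : Fin q), Sum.inr b) ∈
          S ∩ {p : Fin q × (Fin r ⊕ Fin r) | p.1 = 0 ∧ ∃ b, p.2 = Sum.inr b} :=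
        ⟨huS, rfl, b, rfl⟩
      rw [hS2] at this
      exact this
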